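/- arXiv:1704.05120 — 2 statements merged into one kernel-verified Lean document; each statement's English description precedes it below -/
import Mathlib

section
/- Let s ≥ 1 and let S₁, …, S_k be finite sets, each of cardinality at least s, such that |S_i ∩ S_j| ≤ 1 for all i ≠ j. Then for every finite set T, Σ_{i=1}^{k} J(S_i, T) ≤ 1 + k/√s, where J(S,T) = |S ∩ T|/|S ∪ T| is the Jaccard index (with J(S,∅) = 0). In particular, if an index i is drawn uniformly from {1,…,k}, then E_i[J(S_i, T)] ≤ 1/k + 1/√s for every fixed T. -/
open Finset

/-- The Jaccard index `|S ∩ T| / |S ∪ T|` of two finite sets, as a real number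
(equal to `0` when both sets are empty, by the convention `0 / 0 = 0`). -/
noncomputable def jaccard {α : Type*} [DecidableEq α] (S T : Finset α) : ℝ :=
  ((S ∩ T).card : ℝ) / ((S ∪ T).card : ℝ)

/-- **Jaccard similarity to pairwise almost-disjoint large sets.**
Let `s ≥ 1` and let `S₁, …, S_k` be finite sets, each of cardinality at least `s`, with
`|Sᵢ ∩ Sⱼ| ≤ 1` for all `i ≠ j`. Then for every finite set `T`,
`Σᵢ J(Sᵢ, T) ≤ 1 + k/√s`; in particular, if an index `i` is drawn uniformly from
`{1, …, k}` (with `k ≥ 1`), then `E_i[J(Sᵢ, T)] ≤ 1/k + 1/√s`. -/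
theorem sum_jaccard_le {α : Type*} [DecidableEq α] (s k : ℕ) (hs : 1 ≤ s)
    (S : Fin k → Finset α) (hcard : ∀ i, s ≤ (S i).card)
    (hS : ∀ i j, i ≠ j → (S i ∩ S j).card ≤ 1) (T : Finset α) :
    (∑ i, jaccard (S i) T ≤ 1 + (k : ℝ) / Real.sqrt s) ∧
    (k ≠ 0 → (k : ℝ)⁻¹ * ∑ i, jaccard (S i) T ≤ (k : ℝ)⁻¹ + 1 / Real.sqrt s) := by
  -- notation
  set M : ℕ := max s T.card with hM
  have hsM : s ≤ M := le_max_left _ _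
  have htM : T.card ≤ M := le_max_right _ _
  have hM1 : 1 ≤ M := le_trans hs hsM
  have hM0R : (0 : ℝ) < M := by exact_mod_cast hM1
  set r : ℝ := Real.sqrt s with hrdef
  have hr1 : (1 : ℝ) ≤ r := by
    rw [hrdef, show (1:ℝ) = Real.sqrt 1 by simp]
    exact Real.sqrt_le_sqrt (by exact_mod_cast hs)
  have hr0 : (0 : ℝ) < r := lt_of_lt_of_le one_pos hr1
  have hr2 : r ^ 2 = (s : ℝ) := Real.sq_sqrt (by positivity)
  -- the multiplicity function
  set d : α → ℕ := fun x => (univ.filter fun i => x ∈ S i).card with hd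
  -- double counting : ∑ i, |S i ∩ T| = ∑ x ∈ T, d x
  have h1 : ∑ i, (S i ∩ T).card = ∑ x ∈ T, d x := by
    calc ∑ i, (S i ∩ T).card = ∑ i, ∑ x ∈ T, if x ∈ S i then 1 else 0 := by
          refine Finset.sum_congr rfl fun i _ => ?_
          rw [inter_comm, ← Finset.filter_mem_eq_inter, Finset.card_filter]
      _ = ∑ x ∈ T, ∑ i, if x ∈ S i then 1 else 0 := Finset.sum_comm
      _ = ∑ x ∈ T, d x := by
          refine Finset.sum_congr rfl fun x _ => ?_
          rw [hd]
          exact (Finset.card_filter _ _).symm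
  -- second moment bound
  have h2 : ∑ x ∈ T, (d x) ^ 2 ≤ (∑ x ∈ T, d x) + k * k := by
    have hsq : ∀ x, (d x) ^ 2 = ∑ i, ∑ j, (if x ∈ S i then 1 else 0) * (if x ∈ S j then 1 else 0) := by
      intro x
      rw [hd]
      simp only [Finset.card_filter]
      rw [sq, Finset.sum_mul_sum]
    have hswap : ∑ x ∈ T, (d x) ^ 2 = ∑ i, ∑ j, (S i ∩ S j ∩ T).card := by
      simp_rw [hsq]
      rw [Finset.sum_comm]
      refine Finset.sum_congr rfl fun i _ => ?_
      rw [Finset.sum_comm]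
      refine Finset.sum_congr rfl fun j _ => ?_
      rw [inter_comm, ← Finset.filter_mem_eq_inter, Finset.card_filter]
      refine Finset.sum_congr rfl fun x _ => ?_
      by_cases h : x ∈ S i <;> by_cases h' : x ∈ S j <;> simp [h, h', Finset.mem_inter]
    rw [hswap, ← h1]
    have hinner : ∀ i : Fin k, ∑ j, (S i ∩ S j ∩ T).card ≤ (S i ∩ T).card + k := by
      intro i
      rw [← Finset.sum_erase_add _ _ (Finset.mem_univ i)]
      have hdiag : (S i ∩ S i ∩ T).card = (S i ∩ T).card := by rw [inter_self]
      have hoff : ∑ j ∈ univ.erase i, (S i ∩ S j ∩ T).card ≤ k := by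
        calc ∑ j ∈ univ.erase i, (S i ∩ S j ∩ T).card
            ≤ ∑ j ∈ univ.erase i, 1 := by
              refine Finset.sum_le_sum fun j hj => ?_
              have hji : i ≠ j := (Finset.ne_of_mem_erase hj).symm
              exact le_trans (Finset.card_le_card inter_subset_left) (hS i j hji)
          _ ≤ ∑ j : Fin k, 1 := Finset.sum_le_sum_of_subset (Finset.erase_subset _ _)
          _ = k := by simp
      omega
    calc ∑ i, ∑ j, (S i ∩ S j ∩ T).card ≤ ∑ i, ((S i ∩ T).card + k) :=
          Finset.sum_le_sum fun i _ => hinner i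
      _ = (∑ i, (S i ∩ T).card) + k * k := by
          rw [Finset.sum_add_distrib]; simp [mul_comm]
  -- pass to real numbers
  set D : ℝ := ∑ i, ((S i ∩ T).card : ℝ) with hD
  have hD0 : 0 ≤ D := Finset.sum_nonneg fun i _ => by positivity
  have ht0 : (0 : ℝ) ≤ (T.card : ℝ) := by positivity
  -- Cauchy–Schwarz
  have hCS : D ^ 2 ≤ (T.card : ℝ) * (D + (k : ℝ) ^ 2) := by
    have hDr : D = ∑ x ∈ T, ((d x : ℝ)) := by
      rw [hD]
      exact_mod_cast h1
    have h2r : ∑ x ∈ T, ((d x : ℝ)) ^ 2 ≤ (∑ x ∈ T, ((d x : ℝ))) + (k : ℝ) * k := by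
      exact_mod_cast h2
    calc D ^ 2 = (∑ x ∈ T, ((d x : ℝ))) ^ 2 := by rw [hDr]
      _ ≤ (T.card : ℝ) * ∑ x ∈ T, ((d x : ℝ)) ^ 2 := sq_sum_le_card_mul_sum_sq
      _ ≤ (T.card : ℝ) * ((∑ x ∈ T, ((d x : ℝ))) + (k : ℝ) * k) :=
          mul_le_mul_of_nonneg_left h2r ht0
      _ = (T.card : ℝ) * (D + (k : ℝ) ^ 2) := by rw [← hDr]; ring
  -- D ≤ |T| + k √|T|
  set u : ℝ := Real.sqrt T.card with hu
  have hu0 : 0 ≤ u := Real.sqrt_nonneg _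
  have hu2 : u ^ 2 = (T.card : ℝ) := Real.sq_sqrt ht0
  have hkey : D ≤ (T.card : ℝ) + (k : ℝ) * u := by
    by_contra hcon
    push_neg at hcon
    have h1' : 0 < D - (T.card : ℝ) - (k : ℝ) * u := by linarith
    have h2' : 0 < D - (k : ℝ) * u := by linarith
    nlinarith [mul_pos h1' h2', hCS, hu2, mul_nonneg (Nat.cast_nonneg k : (0:ℝ) ≤ k) hu0]
  -- u * r ≤ M
  have hur : u * r ≤ (M : ℝ) := by
    have h : u * r = Real.sqrt ((T.card : ℝ) * s) := by
      rw [hu, hrdef, ← Real.sqrt_mul ht0]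
    rw [h]
    have : (T.card : ℝ) * s ≤ (M : ℝ) * M := by
      apply mul_le_mul <;> [exact_mod_cast htM; exact_mod_cast hsM; positivity; positivity]
    calc Real.sqrt ((T.card : ℝ) * s) ≤ Real.sqrt ((M : ℝ) * M) := Real.sqrt_le_sqrt this
      _ = M := by rw [Real.sqrt_mul_self (le_of_lt hM0R)]
  -- sum of jaccard ≤ D / M
  have hjac : ∑ i, jaccard (S i) T ≤ D / M := by
    rw [hD, Finset.sum_div]
    refine Finset.sum_le_sum fun i _ => ?_
    unfold jaccard
    have hMu : (M : ℝ) ≤ ((S i ∪ T).card : ℝ) := by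
      have : M ≤ (S i ∪ T).card :=
        max_le (le_trans (hcard i) (Finset.card_le_card Finset.subset_union_left))
          (Finset.card_le_card Finset.subset_union_right)
      exact_mod_cast this
    gcongr
  -- first part
  have hmain : ∑ i, jaccard (S i) T ≤ 1 + (k : ℝ) / r := by
    have hDle : D ≤ (M : ℝ) + (k : ℝ) * ((M : ℝ) / r) := by
      have huM : u ≤ (M : ℝ) / r := by
        rw [le_div_iff₀ hr0]; exact hur
      have : (k : ℝ) * u ≤ (k : ℝ) * ((M : ℝ) / r) :=
        mul_le_mul_of_nonneg_left huM (Nat.cast_nonneg k)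
      have htM' : (T.card : ℝ) ≤ (M : ℝ) := by exact_mod_cast htM
      linarith
    calc ∑ i, jaccard (S i) T ≤ D / M := hjac
      _ ≤ ((M : ℝ) + (k : ℝ) * ((M : ℝ) / r)) / M := by gcongr
      _ = 1 + (k : ℝ) / r := by field_simp
  refine ⟨hmain, fun hk => ?_⟩
  have hk0 : (0 : ℝ) < (k : ℝ) := by exact_mod_cast Nat.pos_of_ne_zero hk
  calc (k : ℝ)⁻¹ * ∑ i, jaccard (S i) T ≤ (k : ℝ)⁻¹ * (1 + (k : ℝ) / r) :=
        mul_le_mul_of_nonneg_left hmain (by positivity)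
    _ = (k : ℝ)⁻¹ + 1 / r := by field_simp
end

section
/- Fix n, an integer t ≥ 1, and a set S ⊆ {1,…,n}. Let B = (B_{ij})_{i ∈ S, j ∉ S} have i.i.d. Bernoulli(1/2) entries. Then with probability at least 1 − (n choose t)²·2^{−t²} over B, the following holds: for every symmetric zero-diagonal matrix A ∈ {0,1}^{n×n} satisfying A_{ij} = 1 for all distinct i,j ∈ S and A_{ij} = B_{ij} for all i ∈ S, j ∉ S, every clique C of the graph with adjacency matrix A (i.e., every set C of vertices with A_{uv} = 1 for all distinct u,v ∈ C) satisfies |C ∩ S| < t or |C \ S| < t. In particular, in the semi-random planted clique model, with high probability (taking t = O(log n)) every clique in the graph either intersects the planted clique S in fewer than O(log n) vertices or contains fewer than O(log n) vertices outside S, regardless of the adversary's choices. -/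
/-!
If a clique `C` had `t` vertices `T ⊆ S` and `t` vertices `U ⊆ Sᶜ`, then every pair in `T × U`
would be an edge, and these are exactly the random entries `b i j`, out of the adversary's
reach. So the bad event lies in the union, over at most `(n choose t)²` pairs `(T, U)`, of the
events "`b` is `true` on the rectangle `T × U`", each of probability `2^{-t²}`.
-/

open scoped Classical
open Finset

section BoolFunctions

-- Explicit `DecidableEq` instances, rather than the classical ones, make the `Fintype` instances
-- on function types agree with those of the concrete type `Fin n`.
variable {α ι κ : Type*} [Fintype α] [DecidableEq α] [Fintype ι] [DecidableEq ι] [Fintype κ]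
  [DecidableEq κ]

lemma card_filter_forall_mem_eq_true_mul (s : Finset α) :
    #{f : α → Bool | ∀ a ∈ s, f a = true} * 2 ^ #s = 2 ^ Fintype.card α := by
  have hpi : ({f : α → Bool | ∀ a ∈ s, f a = true} : Finset _) =
      Fintype.piFinset fun a => if a ∈ s then {true} else univ := by
    ext f
    simp only [mem_filter, mem_univ, true_and, Fintype.mem_piFinset]
    refine forall_congr' fun a => ?_
    split_ifs with ha <;> simp [ha]
  rw [hpi, Fintype.card_piFinset, ← card_compl_add_card s, pow_add]
  simp only [apply_ite card, card_singleton, card_univ, Fintype.card_bool]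
  rw [prod_ite, prod_const_one, one_mul, prod_const, filter_notMem_eq_sdiff, compl_eq_univ_sdiff]

def trueOnRect (T : Finset ι) (U : Finset κ) : Finset (ι → κ → Bool) :=
  {b | ∀ i ∈ T, ∀ j ∈ U, b i j = true}

lemma card_trueOnRect_mul (T : Finset ι) (U : Finset κ) :
    #(trueOnRect T U) * 2 ^ (#T * #U) = 2 ^ (Fintype.card ι * Fintype.card κ) := by
  rw [← card_product, ← Fintype.card_prod, ← card_filter_forall_mem_eq_true_mul (T ×ˢ U)]
  congr 1
  refine card_equiv (Equiv.curry ι κ Bool).symm fun b => ?_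
  simp only [trueOnRect, mem_filter, mem_univ, true_and, mem_product, Prod.forall,
    Equiv.curry_symm_apply, Function.uncurry_apply_pair, and_imp]
  exact ⟨fun h i j hi hj => h i hi j hj, fun h i hi j hj => h i j hi hj⟩

end BoolFunctions

section Biclique

variable {α : Type*} [Fintype α] [DecidableEq α]

def HasTrueBiclique (S : Finset α) (t : ℕ) (b : α → α → Bool) : Prop :=
  ∃ T ∈ S.powersetCard t, ∃ U ∈ Sᶜ.powersetCard t, b ∈ trueOnRect T U

lemma hasTrueBiclique_of_isClique {S C : Finset α} {t : ℕ} {A b : α → α → Bool}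
    (hAb : ∀ i ∈ S, ∀ j ∉ S, A i j = b i j) (hC : ∀ u ∈ C, ∀ v ∈ C, u ≠ v → A u v = true)
    (hCS : t ≤ #(C ∩ S)) (hCS' : t ≤ #(C \ S)) : HasTrueBiclique S t b := by
  obtain ⟨T, hTC, rfl⟩ := exists_subset_card_eq hCS
  obtain ⟨U, hUC, hU⟩ := exists_subset_card_eq hCS'
  refine ⟨T, mem_powersetCard.2 ⟨hTC.trans inter_subset_right, rfl⟩,
    U, mem_powersetCard.2 ⟨fun j hj => mem_compl.2 (mem_sdiff.1 (hUC hj)).2, hU⟩,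
    mem_filter.2 ⟨mem_univ b, fun i hi j hj => ?_⟩⟩
  obtain ⟨hiC, hiS⟩ := mem_inter.1 (hTC hi)
  obtain ⟨hjC, hjS⟩ := mem_sdiff.1 (hUC hj)
  rw [← hAb i hiS j hjS]
  exact hC i hiC j hjC (ne_of_mem_of_not_mem hiS hjS)

lemma card_hasTrueBiclique_mul_le (S : Finset α) (t : ℕ) :
    #{b : α → α → Bool | HasTrueBiclique S t b} * 2 ^ (t * t) ≤
      (Fintype.card α).choose t ^ 2 * 2 ^ (Fintype.card α * Fintype.card α) := by
  set blocks := S.powersetCard t ×ˢ Sᶜ.powersetCard t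
  have hcover : ({b | HasTrueBiclique S t b} : Finset (α → α → Bool)) ⊆
      blocks.biUnion fun p => trueOnRect p.1 p.2 := by
    rintro b hb
    obtain ⟨T, hT, U, hU, hTU⟩ := (mem_filter.1 hb).2
    exact mem_biUnion.2 ⟨(T, U), mem_product.2 ⟨hT, hU⟩, hTU⟩
  have hblock : ∀ p ∈ blocks, #(trueOnRect p.1 p.2) * 2 ^ (t * t) =
      2 ^ (Fintype.card α * Fintype.card α) := by
    rintro ⟨T, U⟩ hp
    simp only [blocks, mem_product, mem_powersetCard] at hp
    rw [← card_trueOnRect_mul T U, hp.1.2, hp.2.2]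
  have hblocks : #blocks ≤ (Fintype.card α).choose t ^ 2 := by
    rw [card_product, card_powersetCard, card_powersetCard, sq]
    exact Nat.mul_le_mul (Nat.choose_le_choose t (card_le_univ S))
      (Nat.choose_le_choose t (card_le_univ Sᶜ))
  calc _ ≤ (∑ p ∈ blocks, #(trueOnRect p.1 p.2)) * 2 ^ (t * t) :=
        Nat.mul_le_mul_right _ ((card_le_card hcover).trans card_biUnion_le)
    _ = #blocks * 2 ^ (Fintype.card α * Fintype.card α) := by
      rw [sum_mul, sum_congr rfl hblock, sum_const, smul_eq_mul]
    _ ≤ _ := Nat.mul_le_mul_right _ hblocks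

lemma one_sub_le_card_filter_not_hasTrueBiclique_div (S : Finset α) (t : ℕ) :
    1 - ((Fintype.card α).choose t : ℝ) ^ 2 / 2 ^ (t ^ 2) ≤
      (#{b : α → α → Bool | ¬HasTrueBiclique S t b} : ℝ) /
        2 ^ (Fintype.card α * Fintype.card α) := by
  have hsplit : (#{b : α → α → Bool | HasTrueBiclique S t b} : ℝ) +
      #{b : α → α → Bool | ¬HasTrueBiclique S t b} =
        2 ^ (Fintype.card α * Fintype.card α) := by
    rw [← Nat.cast_add, card_filter_add_card_filter_not, card_univ, Fintype.card_fun,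
      Fintype.card_fun, Fintype.card_bool, ← pow_mul]
    push_cast
    rfl
  have hbad : (#{b : α → α → Bool | HasTrueBiclique S t b} : ℝ) ≤
      ((Fintype.card α).choose t : ℝ) ^ 2 * 2 ^ (Fintype.card α * Fintype.card α) /
        2 ^ (t ^ 2) := by
    rw [le_div_iff₀ (by positivity), sq t]
    exact_mod_cast card_hasTrueBiclique_mul_le S t
  rw [le_div_iff₀ (by positivity), sub_mul, one_mul, div_mul_eq_mul_div]
  linarith

end Biclique

theorem semirandom_no_large_bilateral_clique_general (n t : ℕ) (S : Finset (Fin n)) :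
    1 - ((n.choose t : ℝ)) ^ 2 / 2 ^ (t ^ 2) ≤
      ((Finset.univ.filter (fun b : Fin n → Fin n → Bool =>
        ∀ A : Fin n → Fin n → Bool,
          (∀ i j, A i j = A j i) →
          (∀ i, A i i = false) →
          (∀ i ∈ S, ∀ j ∈ S, i ≠ j → A i j = true) →
          (∀ i ∈ S, ∀ j ∉ S, A i j = b i j) →
          ∀ C : Finset (Fin n),
            (∀ u ∈ C, ∀ v ∈ C, u ≠ v → A u v = true) →
            (C ∩ S).card < t ∨ (C \ S).card < t)).card : ℝ) / 2 ^ (n * n) := by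
  have hprob := one_sub_le_card_filter_not_hasTrueBiclique_div S t
  rw [Fintype.card_fin] at hprob
  refine hprob.trans (div_le_div_of_nonneg_right (Nat.cast_le.2 (card_le_card fun b hb => ?_))
    (by positivity))
  rw [mem_filter] at hb ⊢
  refine ⟨mem_univ b, fun A _ _ _ hAb C hC => ?_⟩
  by_contra! hlarge
  exact hb.2 (hasTrueBiclique_of_isClique hAb hC hlarge.1 hlarge.2)

/-- **In the semi-random planted clique model, no clique has large intersection with both
the planted clique and its complement.**
Fix `n`, an integer `t ≥ 1` and a set `S ⊆ {1,…,n}`. Let the entries `B_{ij}` for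
`i ∈ S`, `j ∉ S` be i.i.d. Bernoulli(1/2) (modelled by drawing a uniformly random Boolean
matrix `b` and using only its entries with `i ∈ S`, `j ∉ S`). Then, with probability at
least `1 - (n choose t)² · 2^{-t²}` over `b`, the following holds: for every symmetric
zero-diagonal matrix `A ∈ {0,1}^{n×n}` with `A_{ij} = 1` for all distinct `i, j ∈ S` and
`A_{ij} = b_{ij}` for `i ∈ S`, `j ∉ S` (so the entries with `i, j ∉ S` are arbitrary,
as chosen by the adversary), every clique `C` of the graph with adjacency matrix `A`
satisfies `|C ∩ S| < t` or `|C \ S| < t`. -/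
theorem semirandom_no_large_bilateral_clique (n t : ℕ) (ht : 1 ≤ t) (S : Finset (Fin n)) :
    1 - ((n.choose t : ℝ)) ^ 2 / 2 ^ (t ^ 2) ≤
      ((Finset.univ.filter (fun b : Fin n → Fin n → Bool =>
        ∀ A : Fin n → Fin n → Bool,
          (∀ i j, A i j = A j i) →
          (∀ i, A i i = false) →
          (∀ i ∈ S, ∀ j ∈ S, i ≠ j → A i j = true) →
          (∀ i ∈ S, ∀ j ∉ S, A i j = b i j) →
          ∀ C : Finset (Fin n),
            (∀ u ∈ C, ∀ v ∈ C, u ≠ v → A u v = true) →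
            (C ∩ S).card < t ∨ (C \ S).card < t)).card : ℝ) / 2 ^ (n * n) :=
  semirandom_no_large_bilateral_clique_general n t S
end
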